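/- Let K be a commutative ring in which 2 is invertible and a, b ∈ K invertible. In the quaternion algebra A with basis 1, i, j, k, relations i² = a, j² = b, ij = −ji = k, the element R = (1/4)(1⊗1⊗1) + (1/4a)(1⊗i⊗i + i⊗1⊗i + i⊗i⊗1) + (1/4b)(1⊗j⊗j + j⊗1⊗j + j⊗j⊗1) − (1/4ab)(1⊗k⊗k + k⊗1⊗k + k⊗k⊗1) + (1/4ab)(i⊗j⊗k + j⊗k⊗i + k⊗i⊗j) − (1/4ab)(j⊗i⊗k + k⊗j⊗i + i⊗k⊗j) satisfies R¹R²⊗R³ = 1⊗1. -/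

import Mathlib

open TensorProduct Quaternion

namespace QuaternionRMatrix

variable (K : Type*) [CommRing K] (a b : K)

/-- The quaternion unit `i` in `ℍ[K, a, b]` (so `i² = a`). -/
noncomputable def qi : ℍ[K, a, b] := ⟨0, 1, 0, 0⟩

/-- The quaternion unit `j` in `ℍ[K, a, b]` (so `j² = b`). -/
noncomputable def qj : ℍ[K, a, b] := ⟨0, 0, 1, 0⟩

/-- The quaternion unit `k = ij` in `ℍ[K, a, b]`. -/
noncomputable def qk : ℍ[K, a, b] := ⟨0, 0, 0, 1⟩

variable [Invertible (2 : K)] [Invertible a] [Invertible b]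

/-- The canonical R-matrix of the generalized quaternion algebra `A = ℍ[K, a, b]`:
`R = (1/4)(1⊗1⊗1) + (1/4a)(1⊗i⊗i + i⊗1⊗i + i⊗i⊗1) + (1/4b)(1⊗j⊗j + j⊗1⊗j + j⊗j⊗1)
− (1/4ab)(1⊗k⊗k + k⊗1⊗k + k⊗k⊗1) + (1/4ab)(i⊗j⊗k + j⊗k⊗i + k⊗i⊗j)
− (1/4ab)(j⊗i⊗k + k⊗j⊗i + i⊗k⊗j)`. -/
noncomputable def R : ℍ[K, a, b] ⊗[K] (ℍ[K, a, b] ⊗[K] ℍ[K, a, b]) :=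
  let i := qi K a b
  let j := qj K a b
  let k := qk K a b
  let one : ℍ[K, a, b] := 1
  (⅟(2:K) * ⅟(2:K)) • (one ⊗ₜ[K] (one ⊗ₜ[K] one))
  + (⅟(2:K) * ⅟(2:K) * ⅟a) •
      (one ⊗ₜ[K] (i ⊗ₜ[K] i) + i ⊗ₜ[K] (one ⊗ₜ[K] i) + i ⊗ₜ[K] (i ⊗ₜ[K] one))
  + (⅟(2:K) * ⅟(2:K) * ⅟b) •
      (one ⊗ₜ[K] (j ⊗ₜ[K] j) + j ⊗ₜ[K] (one ⊗ₜ[K] j) + j ⊗ₜ[K] (j ⊗ₜ[K] one))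
  - (⅟(2:K) * ⅟(2:K) * ⅟a * ⅟b) •
      (one ⊗ₜ[K] (k ⊗ₜ[K] k) + k ⊗ₜ[K] (one ⊗ₜ[K] k) + k ⊗ₜ[K] (k ⊗ₜ[K] one))
  + (⅟(2:K) * ⅟(2:K) * ⅟a * ⅟b) •
      (i ⊗ₜ[K] (j ⊗ₜ[K] k) + j ⊗ₜ[K] (k ⊗ₜ[K] i) + k ⊗ₜ[K] (i ⊗ₜ[K] j))
  - (⅟(2:K) * ⅟(2:K) * ⅟a * ⅟b) •
      (j ⊗ₜ[K] (i ⊗ₜ[K] k) + k ⊗ₜ[K] (j ⊗ₜ[K] i) + i ⊗ₜ[K] (k ⊗ₜ[K] j))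

/-- Multiplication of the first two tensor factors: `x ⊗ y ⊗ z ↦ xy ⊗ z`. -/
noncomputable def mul12 :
    ℍ[K, a, b] ⊗[K] (ℍ[K, a, b] ⊗[K] ℍ[K, a, b]) →ₗ[K] ℍ[K, a, b] ⊗[K] ℍ[K, a, b] :=
  (TensorProduct.map (LinearMap.mul' K ℍ[K, a, b]) LinearMap.id).comp
    (TensorProduct.assoc K ℍ[K, a, b] ℍ[K, a, b] ℍ[K, a, b]).symm.toLinearMap

end QuaternionRMatrix

/-!
After multiplying the first two factors, `1⊗1⊗1` and each symmetric group
`1⊗x⊗x + x⊗1⊗x + x⊗x⊗1` (`x = i, j, k`, weighted by `1/(4x²)` with `x² = a, b, -ab`) yield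
`¼(1⊗1) + (1/(2x²)) x⊗x`, while each of the two cyclic groups yields `-∑ₓ (1/(4x²)) x⊗x`,
because `ij = -ji = k`, `jk = -kj = -bi` and `ki = -ik = -aj`. So all but `1⊗1` cancels.
-/

namespace QuaternionRMatrix

open QuaternionAlgebra

variable {K : Type*} [CommRing K] {a b : K}

theorem qi_eq_basis_i : qi K a b = (Basis.self K).i := rfl

theorem qj_eq_basis_j : qj K a b = (Basis.self K).j := rfl

theorem qk_eq_basis_k : qk K a b = (Basis.self K).k := rfl

theorem mul12_tmul (x y z : ℍ[K, a, b]) : mul12 K a b (x ⊗ₜ (y ⊗ₜ z)) = (x * y) ⊗ₜ z := rfl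

variable (K a b) [Invertible (2 : K)] [Invertible a] [Invertible b]

theorem quaternion_R_matrix_normalized :
    mul12 K a b (R K a b) = (1 : ℍ[K, a, b]) ⊗ₜ[K] (1 : ℍ[K, a, b]) := by
  simp only [R, qi_eq_basis_i, qj_eq_basis_j, qk_eq_basis_k, map_add, map_sub, map_smul,
    mul12_tmul, one_mul, mul_one, Basis.i_mul_i, Basis.j_mul_j, Basis.k_mul_k, Basis.i_mul_j,
    Basis.j_mul_i, Basis.i_mul_k, Basis.k_mul_i, Basis.j_mul_k, Basis.k_mul_j,
    zero_smul, add_zero, zero_mul, zero_sub, ← smul_tmul', neg_tmul]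
  have h2 : (2 : K) * ⅟2 = 1 := mul_invOf_self 2
  have ha : a * ⅟a = 1 := mul_invOf_self a
  have hb : b * ⅟b = 1 := mul_invOf_self b
  match_scalars <;> grind

end QuaternionRMatrix
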